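/- arXiv:1508.01570 — 2 statements merged into one kernel-verified Lean document; each statement's English description precedes it below -/
import Mathlib

section
/- For every n ≥ 1, the uniform distribution π(σ) = 1/n! on S_n is the unique stationary distribution of the bottom-to-random-with-standardisation chain: Σ_{σ∈S_n} (1/n!)·K_std(σ,τ) = 1/n! for every τ ∈ S_n, and any probability distribution ρ on S_n satisfying Σ_σ ρ(σ)·K_std(σ,τ) = ρ(τ) for all τ is the uniform distribution. -/
/-- The one-line notation word of a permutation `σ ∈ S_n`, as the list
`(σ(1), …, σ(n))` of letters in `{1, …, n}`. -/
def word (n : ℕ) (σ : Equiv.Perm (Fin n)) : List ℕ :=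
  List.ofFn fun p => (σ p : ℕ) + 1

/-- The bottom-to-random-with-standardisation transition matrix on `S_n`: from `σ`,
delete the last letter `i`, relabel every remaining letter `j > i` as `j - 1`, and insert
the letter `n` so that it becomes the `k`-th letter; `K_std σ τ` is `1/n` times the
number of `k ∈ {1, …, n}` for which the result is the word of `τ`. -/
noncomputable def Kstd (n : ℕ) : Matrix (Equiv.Perm (Fin n)) (Equiv.Perm (Fin n)) ℝ :=
  fun σ τ =>
    ((Finset.univ.filter fun k : Fin n =>
      ((word n σ).dropLast.map fun j =>
          if (word n σ).getLastD 0 < j then j - 1 else j).insertIdx (k : ℕ) n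
        = word n τ).card : ℝ) / n

namespace BTR
open Equiv Fin

variable {m : ℕ}

def ains (w : Equiv.Perm (Fin m)) (i : Fin (m + 1)) : Equiv.Perm (Fin (m + 1)) :=
  (finSuccEquiv' (Fin.last m)).trans (w.optionCongr.trans (finSuccEquiv' i).symm)

def del (τ : Equiv.Perm (Fin (m + 1))) : Equiv.Perm (Fin m) :=
  Equiv.removeNone
    ((finSuccEquiv' (τ.symm (Fin.last m))).symm.trans (τ.trans (finSuccEquiv' (Fin.last m))))

def std (σ : Equiv.Perm (Fin (m + 1))) : Equiv.Perm (Fin m) :=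
  Equiv.removeNone
    ((finSuccEquiv' (Fin.last m)).symm.trans (σ.trans (finSuccEquiv' (σ (Fin.last m)))))

theorem ains_castSucc (w : Equiv.Perm (Fin m)) (i : Fin (m + 1)) (p : Fin m) :
    ains w i p.castSucc = i.succAbove (w p) := by
  have : Fin.castSucc p = (Fin.last m).succAbove p := by
    rw [Fin.succAbove_last]
  rw [ains]
  simp only [Equiv.trans_apply, this, finSuccEquiv'_succAbove, Equiv.optionCongr_apply,
    Option.map_some, finSuccEquiv'_symm_some]

theorem ains_last (w : Equiv.Perm (Fin m)) (i : Fin (m + 1)) :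
    ains w i (Fin.last m) = i := by
  simp [ains, finSuccEquiv'_at, finSuccEquiv'_symm_none]

theorem del_spec (τ : Equiv.Perm (Fin (m + 1))) (q : Fin m) :
    Fin.castSucc (del τ q) = τ ((τ.symm (Fin.last m)).succAbove q) := by
  set e := ((finSuccEquiv' (τ.symm (Fin.last m))).symm.trans (τ.trans (finSuccEquiv' (Fin.last m))))
  have he : e (some q) = finSuccEquiv' (Fin.last m) (τ ((τ.symm (Fin.last m)).succAbove q)) := by
    simp [e, finSuccEquiv'_symm_some]
  have hne : τ ((τ.symm (Fin.last m)).succAbove q) ≠ Fin.last m := by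
    intro h
    have := τ.injective (h.trans (τ.apply_symm_apply (Fin.last m)).symm)
    exact Fin.succAbove_ne _ q this
  obtain ⟨x, hx⟩ : ∃ x : Fin m, τ ((τ.symm (Fin.last m)).succAbove q) = Fin.castSucc x :=
    ⟨_, (Fin.castSucc_castPred _ hne).symm⟩
  have hx2 : finSuccEquiv' (Fin.last m) (τ ((τ.symm (Fin.last m)).succAbove q)) = some x := by
    rw [hx, ← Fin.succAbove_last, finSuccEquiv'_succAbove]
  have : some (Equiv.removeNone e q) = e (some q) :=
    Equiv.removeNone_some e ⟨x, by rw [he, hx2]⟩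
  rw [he, hx2] at this
  have : del τ q = x := Option.some_injective _ this
  rw [this, hx]

theorem std_spec (σ : Equiv.Perm (Fin (m + 1))) (q : Fin m) :
    (σ (Fin.last m)).succAbove (std σ q) = σ (Fin.castSucc q) := by
  set e := ((finSuccEquiv' (Fin.last m)).symm.trans (σ.trans (finSuccEquiv' (σ (Fin.last m)))))
  have he : e (some q) = finSuccEquiv' (σ (Fin.last m)) (σ (Fin.castSucc q)) := by
    simp [e, finSuccEquiv'_symm_some, Fin.succAbove_last]
  have hne : σ (Fin.castSucc q) ≠ σ (Fin.last m) := fun h =>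
    (Fin.castSucc_lt_last q).ne (σ.injective h)
  obtain ⟨x, hx⟩ : ∃ x : Fin m, finSuccEquiv' (σ (Fin.last m)) (σ (Fin.castSucc q)) = some x := by
    rcases (finSuccEquiv' (σ (Fin.last m)) (σ (Fin.castSucc q))).eq_none_or_eq_some with h | h
    · exfalso; apply hne
      have := (finSuccEquiv' (σ (Fin.last m))).injective (h.trans (finSuccEquiv'_at _).symm)
      exact this
    · exact h
  have h2 : some (Equiv.removeNone e q) = e (some q) :=
    Equiv.removeNone_some e ⟨x, by rw [he, hx]⟩
  rw [he, hx] at h2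
  have h3 : std σ q = x := Option.some_injective _ h2
  rw [h3, ← finSuccEquiv'_symm_some, ← hx, Equiv.symm_apply_apply]

end BTR

namespace BTR
variable {m : ℕ}

theorem std_ains (w : Equiv.Perm (Fin m)) (i : Fin (m + 1)) : std (ains w i) = w := by
  ext q : 1
  have h1 := std_spec (ains w i) q
  rw [ains_last, ains_castSucc] at h1
  exact (Fin.succAbove_right_injective (p := i)) h1

theorem ains_std (σ : Equiv.Perm (Fin (m + 1))) : ains (std σ) (σ (Fin.last m)) = σ := by
  ext p : 1
  induction p using Fin.lastCases with
  | last => rw [ains_last]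
  | cast q => rw [ains_castSucc, std_spec]

theorem symm_ains_last (w : Equiv.Perm (Fin m)) (i : Fin (m + 1)) :
    (ains w i).symm i = Fin.last m := by
  rw [Equiv.symm_apply_eq, ains_last]

theorem del_ains_last (w : Equiv.Perm (Fin m)) : del (ains w (Fin.last m)) = w := by
  ext q : 1
  have h1 := del_spec (ains w (Fin.last m)) q
  rw [symm_ains_last, Fin.succAbove_last, ains_castSucc, Fin.succAbove_last] at h1
  exact Fin.castSucc_injective _ h1

theorem del_ains (v : Equiv.Perm (Fin (m + 1))) (i : Fin (m + 2)) (h : i ≠ Fin.last (m + 1)) :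
    del (ains v i) = ains (del v) (i.castPred h) := by
  have hpos : (ains v i).symm (Fin.last (m + 1)) = Fin.castSucc (v.symm (Fin.last m)) := by
    rw [Equiv.symm_apply_eq, ains_castSucc, Equiv.apply_symm_apply,
      Fin.succAbove_ne_last_last h]
  ext q : 1
  apply Fin.castSucc_injective
  rw [del_spec, hpos]
  induction q using Fin.lastCases with
  | last =>
    rw [ains_last, Fin.castSucc_castPred]
    have : (Fin.castSucc (v.symm (Fin.last m))).succAbove (Fin.last m) = Fin.last (m + 1) := by
      rw [Fin.succAbove_castSucc_of_le _ _ (Fin.le_last _), Fin.succ_last]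
    rw [this, ains_last]
  | cast r =>
    rw [Fin.castSucc_succAbove_castSucc, ains_castSucc, ← del_spec, ains_castSucc,
      ← Fin.castSucc_succAbove_castSucc, Fin.castSucc_castPred]

end BTR


namespace BTR
variable {m : ℕ}

@[simp] theorem word_length {n : ℕ} (σ : Equiv.Perm (Fin n)) : (word n σ).length = n := by
  simp [word]

theorem word_getElem {n : ℕ} (σ : Equiv.Perm (Fin n)) (j : ℕ) (h : j < n) :
    (word n σ)[j]'(by simp [word]; exact h) = (σ ⟨j, h⟩ : ℕ) + 1 := by
  simp [word]

theorem word_getLastD (σ : Equiv.Perm (Fin (m + 1))) :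
    (word (m + 1) σ).getLastD 0 = (σ (Fin.last m) : ℕ) + 1 := by
  have hne : word (m + 1) σ ≠ [] := by
    intro h
    have := word_length σ
    rw [h] at this
    simp at this
  rw [List.getLastD_eq_getLast?, List.getLast?_eq_getLast hne, Option.getD_some]
  exact List.getLast_ofFn_succ _

theorem word_injective {n : ℕ} {σ τ : Equiv.Perm (Fin n)} (h : word n σ = word n τ) : σ = τ := by
  ext p : 1
  have h1 := List.getElem_of_eq h (show (p : ℕ) < (word n σ).length by simpa using p.isLt)
  rw [word_getElem σ p p.isLt, word_getElem τ p p.isLt] at h1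
  simp only [Fin.eta] at h1
  exact Fin.ext (by omega)

end BTR



namespace BTR
variable {m : ℕ}

theorem word_std (σ : Equiv.Perm (Fin (m + 1))) :
    ((word (m + 1) σ).dropLast.map fun j =>
        if (word (m + 1) σ).getLastD 0 < j then j - 1 else j) = word m (std σ) := by
  apply List.ext_getElem
  · simp
  intro q hq hq'
  have hq1 : q < m := by simpa using hq'
  rw [List.getElem_map, List.getElem_dropLast, word_getElem σ q (by omega), word_getLastD,
    word_getElem (std σ) q hq1]
  have hs := std_spec σ ⟨q, hq1⟩
  have hcast : Fin.castSucc (⟨q, hq1⟩ : Fin m) = (⟨q, by omega⟩ : Fin (m + 1)) := rfl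
  rw [hcast] at hs
  rcases Fin.lt_or_le (Fin.castSucc (std σ ⟨q, hq1⟩)) (σ (Fin.last m)) with hlt | hle
  · rw [Fin.succAbove_of_castSucc_lt _ _ hlt] at hs
    have h2 : (σ (⟨q, by omega⟩ : Fin (m + 1)) : ℕ) = (std σ ⟨q, hq1⟩ : ℕ) := by
      rw [← hs]; rfl
    rw [Fin.lt_def] at hlt
    simp only [Fin.coe_castSucc] at hlt
    split_ifs <;> omega
  · rw [Fin.succAbove_of_le_castSucc _ _ hle] at hs
    have h2 : (σ (⟨q, by omega⟩ : Fin (m + 1)) : ℕ) = (std σ ⟨q, hq1⟩ : ℕ) + 1 := by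
      rw [← hs]; rfl
    rw [Fin.le_def] at hle
    simp only [Fin.coe_castSucc] at hle
    split_ifs <;> omega

theorem word_entry_le (w : Equiv.Perm (Fin m)) (j : ℕ) (hj : j < (word m w).length) :
    (word m w)[j] ≤ m := by
  have hj' : j < m := by simpa using hj
  rw [word_getElem w j hj']
  have := (w ⟨j, hj'⟩).isLt
  omega

theorem insert_entry_le (w : Equiv.Perm (Fin m)) (k : Fin (m + 1)) (j : ℕ)
    (hj : j < m + 1) (hne : j ≠ (k : ℕ)) :
    ((word m w).insertIdx (k : ℕ) (m + 1))[j]'(by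
      rw [List.length_insertIdx_of_le_length (by simp [Nat.lt_succ_iff.mp k.isLt])]; simpa using hj) ≤ m := by
  have hkle : (k : ℕ) ≤ (word m w).length := by simp [Nat.lt_succ_iff.mp k.isLt]
  rcases Nat.lt_or_ge j (k : ℕ) with hlt | hge
  · rw [List.getElem_insertIdx_of_lt hlt]
    exact word_entry_le w j (by simp; omega)
  · have hgt : (k : ℕ) < j := lt_of_le_of_ne hge (fun hh => hne hh.symm)
    obtain ⟨r, hr⟩ : ∃ r, j = (k : ℕ) + r + 1 := ⟨j - (k : ℕ) - 1, by omega⟩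
    subst hr
    rw [List.getElem_insertIdx_add_succ (word m w) (m + 1) (k : ℕ) r (by simp; omega)]
    exact word_entry_le w _ (by simp; omega)

theorem word_insert_del (τ : Equiv.Perm (Fin (m + 1))) :
    (word m (del τ)).insertIdx ((τ.symm (Fin.last m) : ℕ)) (m + 1) = word (m + 1) τ := by
  have hkle : ((τ.symm (Fin.last m) : ℕ)) ≤ (word m (del τ)).length := by
    simp [Nat.lt_succ_iff.mp (τ.symm (Fin.last m)).isLt]
  apply List.ext_getElem
  · rw [List.length_insertIdx_of_le_length hkle]; simp
  intro j hj hj'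
  have hjm : j < m + 1 := by simpa using hj'
  rcases Nat.lt_trichotomy j ((τ.symm (Fin.last m) : ℕ)) with hlt | heq | hgt
  · have hjm' : j < m := by simp at hkle; omega
    rw [List.getElem_insertIdx_of_lt hlt,
      word_getElem (del τ) j hjm', word_getElem τ j hjm]
    have hdel := del_spec τ (⟨j, hjm'⟩ : Fin m)
    have hsa : (τ.symm (Fin.last m)).succAbove (⟨j, hjm'⟩ : Fin m) = (⟨j, hjm⟩ : Fin (m + 1)) :=
      Fin.succAbove_of_castSucc_lt _ _ (by rw [Fin.lt_def]; simpa using hlt)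
    rw [hsa] at hdel
    have h5 := congrArg Fin.val hdel
    simp only [Fin.coe_castSucc] at h5
    omega
  · subst heq
    rw [List.getElem_insertIdx_self (l := word m (del τ)) (x := m + 1), word_getElem τ _ hjm]
    have h5 : τ (⟨((τ.symm (Fin.last m) : ℕ)), hjm⟩ : Fin (m + 1)) = Fin.last m := by
      rw [Fin.eta]; exact τ.apply_symm_apply _
    rw [h5]
    simp
  · obtain ⟨r, hr⟩ : ∃ r, j = ((τ.symm (Fin.last m) : ℕ)) + r + 1 :=
      ⟨j - ((τ.symm (Fin.last m) : ℕ)) - 1, by omega⟩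
    subst hr
    have hb1 : ((τ.symm (Fin.last m) : ℕ)) + r < m := by simp at hkle hjm ⊢; omega
    rw [List.getElem_insertIdx_add_succ (word m (del τ)) (m + 1) _ r (by simp; omega),
      word_getElem (del τ) _ hb1, word_getElem τ _ hjm]
    have hdel := del_spec τ (⟨(τ.symm (Fin.last m) : ℕ) + r, hb1⟩ : Fin m)
    have hsa : (τ.symm (Fin.last m)).succAbove (⟨(τ.symm (Fin.last m) : ℕ) + r, hb1⟩ : Fin m)
        = (⟨(τ.symm (Fin.last m) : ℕ) + r + 1, hjm⟩ : Fin (m + 1)) := by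
      rw [Fin.succAbove_of_le_castSucc _ _ (by rw [Fin.le_def]; simp)]
      exact Fin.ext (by simp)
    rw [hsa] at hdel
    have h5 := congrArg Fin.val hdel
    simp only [Fin.coe_castSucc] at h5
    omega

theorem insert_eq_iff (w : Equiv.Perm (Fin m)) (τ : Equiv.Perm (Fin (m + 1))) (k : Fin (m + 1)) :
    (word m w).insertIdx (k : ℕ) (m + 1) = word (m + 1) τ ↔
      k = τ.symm (Fin.last m) ∧ w = del τ := by
  constructor
  · intro h
    have h2 : (word m w).insertIdx (k : ℕ) (m + 1)
        = (word m (del τ)).insertIdx ((τ.symm (Fin.last m) : ℕ)) (m + 1) := by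
      rw [h, word_insert_del]
    have hkK : k = τ.symm (Fin.last m) := by
      by_contra hne
      have hne' : (k : ℕ) ≠ ((τ.symm (Fin.last m) : ℕ)) := fun hh => hne (Fin.ext hh)
      have h3 := insert_entry_le (del τ) (τ.symm (Fin.last m)) (k : ℕ) k.isLt hne'
      have h5 := List.getElem_insertIdx_self (l := word m w) (x := m + 1) (i := (k : ℕ))
        (by rw [List.length_insertIdx_of_le_length (by simp [Nat.lt_succ_iff.mp k.isLt])]; simp [k.isLt])
      have h6 := List.getElem_of_eq h2 (show (k : ℕ) < _ by
        rw [List.length_insertIdx_of_le_length (by simp [Nat.lt_succ_iff.mp k.isLt])]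
        simp [k.isLt])
      have h7 : ((word m (del τ)).insertIdx ((τ.symm (Fin.last m) : ℕ)) (m + 1))[(k : ℕ)]'(by
          rw [List.length_insertIdx_of_le_length (by simp [Nat.lt_succ_iff.mp (τ.symm (Fin.last m)).isLt])]
          simp [k.isLt]) = m + 1 := h6.symm.trans h5
      rw [h7] at h3
      omega
    refine ⟨hkK, ?_⟩
    rw [hkK] at h2
    exact word_injective (List.insertIdx_injective _ _ h2)
  · rintro ⟨rfl, rfl⟩
    exact word_insert_del τ

theorem Kstd_eq (σ τ : Equiv.Perm (Fin (m + 1))) :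
    Kstd (m + 1) σ τ = if std σ = del τ then (1 : ℝ) / (m + 1) else 0 := by
  have hfilter : (Finset.univ.filter fun k : Fin (m + 1) =>
      ((word (m + 1) σ).dropLast.map fun j =>
          if (word (m + 1) σ).getLastD 0 < j then j - 1 else j).insertIdx (k : ℕ) (m + 1)
        = word (m + 1) τ)
      = if std σ = del τ then {τ.symm (Fin.last m)} else ∅ := by
    ext k
    simp only [Finset.mem_filter, Finset.mem_univ, true_and, word_std, insert_eq_iff]
    split_ifs with hc
    · simp [hc]
    · simp only [Finset.notMem_empty, iff_false]
      rintro ⟨-, h2⟩; exact hc h2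
  rw [Kstd]
  simp only [hfilter]
  split_ifs
  · simp
  · simp

end BTR


namespace BTR
variable {m : ℕ}

/-- `S_m × {1,…,m+1} ≃ S_{m+1}` via appending a last letter. -/
def permEquiv (m : ℕ) : Equiv.Perm (Fin m) × Fin (m + 1) ≃ Equiv.Perm (Fin (m + 1)) where
  toFun x := ains x.1 x.2
  invFun σ := (std σ, σ (Fin.last m))
  left_inv x := by
    refine Prod.ext ?_ ?_
    · exact std_ains x.1 x.2
    · exact ains_last x.1 x.2
  right_inv σ := ains_std σ

theorem sum_perm_eq (F : Equiv.Perm (Fin (m + 1)) → ℝ) :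
    ∑ σ : Equiv.Perm (Fin (m + 1)), F σ
      = ∑ w : Equiv.Perm (Fin m), ∑ i : Fin (m + 1), F (ains w i) := by
  rw [← Equiv.sum_comp (permEquiv m) F, Fintype.sum_prod_type]
  rfl

theorem harmonic_const : ∀ (k : ℕ) (F : Equiv.Perm (Fin (k + 1)) → ℝ),
    (∀ w, F w = (∑ i : Fin (k + 1), F (ains (del w) i)) / ((k : ℝ) + 1)) →
    ∀ w w', F w = F w' := by
  intro k
  induction k with
  | zero =>
    intro F _ w w'
    have hww : w = w' := by
      ext p : 1
      have h1 := (w p).isLt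
      have h2 := (w' p).isLt
      exact Fin.ext (by omega)
    rw [hww]
  | succ k IH =>
    intro F hF w w'
    obtain ⟨G, hGdef⟩ : ∃ G : Equiv.Perm (Fin (k + 1)) → ℝ,
        ∀ v, G v = ∑ i : Fin (k + 1 + 1), F (ains v i) := ⟨_, fun _ => rfl⟩
    have hk2 : ((k : ℝ) + 1 + 1) ≠ 0 := by positivity
    have hFG : ∀ u, F u = G (del u) / ((k : ℝ) + 1 + 1) := by
      intro u
      rw [hF u, hGdef]
      congr 1
      push_cast
      ring
    have hsplit : ∀ v : Equiv.Perm (Fin (k + 1)),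
        ∑ i : Fin (k + 1 + 1), G (del (ains v i))
          = (∑ i : Fin (k + 1), G (ains (del v) i)) + G v := by
      intro v
      rw [Fin.sum_univ_castSucc]
      congr 1
      · apply Finset.sum_congr rfl
        intro i _
        have h1 := del_ains v i.castSucc (Fin.castSucc_lt_last i).ne
        rw [h1, Fin.castPred_castSucc]
      · rw [del_ains_last]
    have hGQ : ∀ v, G v = (∑ i : Fin (k + 1), G (ains (del v) i)) / ((k : ℝ) + 1) := by
      intro v
      have h1 : G v = (∑ i : Fin (k + 1 + 1), G (del (ains v i))) / ((k : ℝ) + 1 + 1) := by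
        rw [hGdef, Finset.sum_congr rfl (fun i _ => hFG (ains v i)), ← Finset.sum_div]
      rw [hsplit] at h1
      have hk1 : ((k : ℝ) + 1) ≠ 0 := by positivity
      field_simp at h1 ⊢
      linarith
    have hGconst := IH G hGQ
    rw [hFG w, hFG w', hGconst (del w) (del w')]

end BTR

/-- **The uniform distribution is the unique stationary distribution of the
bottom-to-random-with-standardisation chain on `S_n`.** -/
theorem bottom_to_random_with_std_unique_stationary (n : ℕ) (hn : 1 ≤ n) :
    (∀ τ : Equiv.Perm (Fin n),
      ∑ σ : Equiv.Perm (Fin n), (1 / (Nat.factorial n : ℝ)) * Kstd n σ τ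
        = 1 / (Nat.factorial n : ℝ)) ∧
    (∀ ρ : Equiv.Perm (Fin n) → ℝ,
      (∀ σ, 0 ≤ ρ σ) → (∑ σ, ρ σ = 1) →
      (∀ τ, ∑ σ, ρ σ * Kstd n σ τ = ρ τ) →
      ∀ σ, ρ σ = 1 / (Nat.factorial n : ℝ)) := by
  obtain ⟨m, rfl⟩ : ∃ m, n = m + 1 := ⟨n - 1, by omega⟩
  have hcard : Fintype.card (Equiv.Perm (Fin (m + 1))) = Nat.factorial (m + 1) := by
    rw [Fintype.card_perm, Fintype.card_fin]
  have hm1 : ((m : ℝ) + 1) ≠ 0 := by positivity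
  have hK1 : ∀ τ : Equiv.Perm (Fin (m + 1)),
      ∑ σ : Equiv.Perm (Fin (m + 1)), Kstd (m + 1) σ τ = 1 := by
    intro τ
    rw [BTR.sum_perm_eq (fun σ => Kstd (m + 1) σ τ)]
    simp only [BTR.Kstd_eq, BTR.std_ains]
    have hstep : ∀ w : Equiv.Perm (Fin m),
        (∑ _i : Fin (m + 1), if w = BTR.del τ then (1 : ℝ) / (↑m + 1) else 0)
          = if w = BTR.del τ then ((m : ℝ) + 1) * (1 / ((m : ℝ) + 1)) else 0 := by
      intro w
      split_ifs
      · rw [Finset.sum_const, Finset.card_univ, Fintype.card_fin, nsmul_eq_mul]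
        push_cast
        ring
      · simp
    rw [Finset.sum_congr rfl (fun w _ => hstep w), Finset.sum_ite_eq' Finset.univ (BTR.del τ)
      (fun _ => ((m : ℝ) + 1) * (1 / ((m : ℝ) + 1))), if_pos (Finset.mem_univ _)]
    field_simp
  refine ⟨?_, ?_⟩
  · intro τ
    rw [← Finset.mul_sum, hK1 τ, mul_one]
  · intro ρ hpos hsum1 hstat σ0
    have hQ : ∀ τ, ρ τ = (∑ i : Fin (m + 1), ρ (BTR.ains (BTR.del τ) i)) / ((m : ℝ) + 1) := by
      intro τ
      rw [← hstat τ, BTR.sum_perm_eq (fun σ => ρ σ * Kstd (m + 1) σ τ)]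
      simp only [BTR.Kstd_eq, BTR.std_ains, mul_ite, mul_zero, mul_one_div]
      have hstep : ∀ w : Equiv.Perm (Fin m),
          (∑ i : Fin (m + 1), if w = BTR.del τ then ρ (BTR.ains w i) / (↑m + 1) else 0)
            = if w = BTR.del τ then (∑ i : Fin (m + 1), ρ (BTR.ains w i)) / ((m : ℝ) + 1)
              else 0 := by
        intro w
        split_ifs
        · rw [Finset.sum_div]
        · simp
      rw [Finset.sum_congr rfl (fun w _ => hstep w), Finset.sum_ite_eq' Finset.univ (BTR.del τ)
        (fun w => (∑ i : Fin (m + 1), ρ (BTR.ains w i)) / ((m : ℝ) + 1)),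
        if_pos (Finset.mem_univ _)]
    have hconst := BTR.harmonic_const m ρ hQ
    have htotal : ∑ σ : Equiv.Perm (Fin (m + 1)), ρ σ
        = (Nat.factorial (m + 1) : ℝ) * ρ σ0 := by
      rw [Finset.sum_congr rfl (fun σ _ => hconst σ σ0), Finset.sum_const, Finset.card_univ,
        hcard, nsmul_eq_mul]
    rw [hsum1] at htotal
    have hfac : (Nat.factorial (m + 1) : ℝ) ≠ 0 := Nat.cast_ne_zero.mpr (Nat.factorial_ne_zero _)
    field_simp
    linarith
end

section
/- For every n ≥ 1, the bottom-to-random-with-standardisation transition matrix K_std on S_n, viewed as a matrix over ℝ, is diagonalisable. -/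
open Equiv Fin

/-- Delete the last letter of `σ` and standardise. -/
def fperm {m : ℕ} (σ : Equiv.Perm (Fin (m + 1))) : Equiv.Perm (Fin m) :=
  Equiv.removeNone
    ((finSuccEquiv' (Fin.last m)).symm.trans (σ.trans (finSuccEquiv' (σ (Fin.last m)))))

lemma fperm_spec {m : ℕ} (σ : Equiv.Perm (Fin (m + 1))) (p : Fin m) :
    (σ (Fin.last m)).succAbove (fperm σ p) = σ (Fin.castSucc p) := by
  set e := (finSuccEquiv' (Fin.last m)).symm.trans (σ.trans (finSuccEquiv' (σ (Fin.last m))))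
  have he : e (some p) = finSuccEquiv' (σ (Fin.last m)) (σ (Fin.castSucc p)) := by
    simp [e, finSuccEquiv'_symm_some, Fin.succAbove_last]
  have hne : σ (Fin.castSucc p) ≠ σ (Fin.last m) :=
    fun h => (Fin.castSucc_lt_last p).ne (σ.injective h)
  obtain ⟨q, hq⟩ := Fin.exists_succAbove_eq hne
  have he2 : e (some p) = some q := by rw [he, ← hq, finSuccEquiv'_succAbove]
  have := Equiv.removeNone_some e ⟨q, he2⟩
  rw [he2] at this
  have hfq : fperm σ p = q := Option.some_injective _ this
  rw [hfq, hq]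

lemma fperm_eq_of {m : ℕ} (σ : Equiv.Perm (Fin (m + 1))) (p q : Fin m)
    (h : (σ (Fin.last m)).succAbove q = σ (Fin.castSucc p)) : fperm σ p = q :=
  Fin.succAbove_right_injective (by rw [fperm_spec, h])

/-- Insert the letter `m+1` into `ρ` at position `k`. -/
def insperm {m : ℕ} (ρ : Equiv.Perm (Fin m)) (k : Fin (m + 1)) : Equiv.Perm (Fin (m + 1)) :=
  (finSuccEquiv' k).trans ((Equiv.optionCongr ρ).trans (finSuccEquiv' (Fin.last m)).symm)

@[simp] lemma insperm_self {m : ℕ} (ρ : Equiv.Perm (Fin m)) (k : Fin (m + 1)) :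
    insperm ρ k k = Fin.last m := by
  simp [insperm, finSuccEquiv'_at, finSuccEquiv'_symm_none]

@[simp] lemma insperm_succAbove {m : ℕ} (ρ : Equiv.Perm (Fin m)) (k : Fin (m + 1)) (p : Fin m) :
    insperm ρ k (k.succAbove p) = Fin.castSucc (ρ p) := by
  simp [insperm, finSuccEquiv'_succAbove, finSuccEquiv'_symm_some, Fin.succAbove_last]

lemma insperm_k_injective {m : ℕ} (ρ ρ' : Equiv.Perm (Fin m)) {k k' : Fin (m + 1)}
    (h : insperm ρ k = insperm ρ' k') : k = k' := by
  have h1 : insperm ρ' k' k = Fin.last m := by rw [← h]; simp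
  have h2 : insperm ρ' k' k' = Fin.last m := by simp
  exact (insperm ρ' k').injective (h1.trans h2.symm)

lemma word_injective {n : ℕ} {σ τ : Equiv.Perm (Fin n)} (h : word n σ = word n τ) : σ = τ := by
  rw [word, word, List.ofFn_inj] at h
  ext p
  have := congrFun h p
  omega

lemma word_getElem {n : ℕ} (σ : Equiv.Perm (Fin n)) (i : ℕ) (h : i < n)
    (h' : i < (word n σ).length) :
    (word n σ)[i] = (σ ⟨i, h⟩ : ℕ) + 1 := by
  simp [word]

/-- inserting `m+1` into the word of `ρ` gives the word of `insperm ρ k`. -/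
lemma insert_word {m : ℕ} (ρ : Equiv.Perm (Fin m)) (k : Fin (m + 1)) :
    (word m ρ).insertIdx (k : ℕ) (m + 1) = word (m + 1) (insperm ρ k) := by
  have hlen : (word m ρ).length = m := by simp [word]
  have hk : (k : ℕ) ≤ (word m ρ).length := by rw [hlen]; exact Nat.lt_succ_iff.mp k.isLt
  apply List.ext_getElem
  · rw [List.length_insertIdx_of_le_length hk, hlen]; simp [word]
  intro i h1 h2
  have him : i < m + 1 := by simpa [word] using h2
  rw [word_getElem _ i him (by simpa [word] using h2)]
  rcases lt_trichotomy i (k : ℕ) with hik | hik | hik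
  · have hi : i < m := lt_of_lt_of_le hik (Nat.lt_succ_iff.mp k.isLt)
    rw [List.getElem_insertIdx_of_lt hik h1, word_getElem _ i hi (by simp [word, hi])]
    have hs : (⟨i, him⟩ : Fin (m + 1)) = k.succAbove ⟨i, hi⟩ := by
      rw [Fin.succAbove_of_castSucc_lt _ _ hik]
      rfl
    rw [hs, insperm_succAbove]
    simp
  · subst hik
    rw [List.getElem_insertIdx_self h1]
    have : (⟨(k : ℕ), him⟩ : Fin (m + 1)) = k := rfl
    rw [this, insperm_self]
    simp
  · obtain ⟨j, rfl⟩ : ∃ j, i = (k : ℕ) + j + 1 := ⟨i - k - 1, by omega⟩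
    have hj : (k : ℕ) + j < m := by omega
    rw [List.getElem_insertIdx_add_succ _ _ _ _ (by rwa [hlen]), word_getElem _ _ hj (by simp [word]; omega)]
    have hs : (⟨(k : ℕ) + j + 1, him⟩ : Fin (m + 1)) = k.succAbove ⟨(k : ℕ) + j, hj⟩ := by
      rw [Fin.succAbove_of_le_castSucc]
      · rfl
      · rw [Fin.le_castSucc_iff, Fin.lt_iff_val_lt_val]
        simpa using by omega
    rw [hs, insperm_succAbove]
    simp

/-- Deleting the last letter and standardising gives the word of `fperm σ`. -/
lemma std_word {m : ℕ} (σ : Equiv.Perm (Fin (m + 1))) :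
    ((word (m + 1) σ).dropLast.map fun j =>
        if (word (m + 1) σ).getLastD 0 < j then j - 1 else j) = word m (fperm σ) := by
  have hw : word (m + 1) σ =
      (List.ofFn fun i : Fin m => (σ (Fin.castSucc i) : ℕ) + 1).concat ((σ (Fin.last m) : ℕ) + 1) := by
    rw [word, List.ofFn_succ']
  rw [hw]
  rw [List.concat_eq_append, List.dropLast_concat, ← List.concat_eq_append]
  have hlast : ((List.ofFn fun i : Fin m => (σ (Fin.castSucc i) : ℕ) + 1).concat
      ((σ (Fin.last m) : ℕ) + 1)).getLastD 0 = (σ (Fin.last m) : ℕ) + 1 := by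
    rw [List.concat_eq_append, List.getLastD_concat]
  rw [hlast, List.map_ofFn, word, List.ofFn_inj]
  funext p
  have hspec := fperm_spec σ p
  set i := σ (Fin.last m)
  set q := fperm σ p
  simp only [Function.comp_apply]
  rw [← hspec]
  rcases lt_or_ge (Fin.castSucc q) i with h | h
  · rw [Fin.succAbove_of_castSucc_lt _ _ h]
    have hqi : (q : ℕ) < (i : ℕ) := h
    simp only [Fin.coe_castSucc]
    rw [if_neg (by omega)]
  · rw [Fin.succAbove_of_le_castSucc _ _ h]
    have hqi : (i : ℕ) ≤ (q : ℕ) := h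
    simp only [Fin.val_succ]
    rw [if_pos (by omega)]
    omega

/-- Inserting at the last position then deleting the last recovers `ρ`. -/
lemma fperm_insperm_last {m : ℕ} (ρ : Equiv.Perm (Fin m)) :
    fperm (insperm ρ (Fin.last m)) = ρ := by
  ext p
  rw [show (fperm (insperm ρ (Fin.last m))) p = ρ p from ?_]
  apply fperm_eq_of
  rw [insperm_self, ← Fin.succAbove_last, insperm_succAbove, Fin.succAbove_last]

/-- Inserting at a non-last position commutes with delete-last-and-standardise. -/
lemma fperm_insperm_castSucc {m : ℕ} (ρ : Equiv.Perm (Fin (m + 1))) (k : Fin (m + 1)) :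
    fperm (insperm ρ (Fin.castSucc k)) = insperm (fperm ρ) k := by
  set τ := insperm ρ (Fin.castSucc k) with hτ
  have hlastm : Fin.last (m + 1) = (Fin.castSucc k).succAbove (Fin.last m) := by
    rw [Fin.succAbove_of_le_castSucc _ _ (Fin.castSucc_le_castSucc_iff.mpr (Fin.le_last k))]
    exact (Fin.succ_last m).symm
  have hτlast : τ (Fin.last (m + 1)) = Fin.castSucc (ρ (Fin.last m)) := by
    rw [hlastm, hτ, insperm_succAbove]
  ext p
  rw [show fperm τ p = insperm (fperm ρ) k p from ?_]
  apply fperm_eq_of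
  rw [hτlast]
  rcases eq_or_ne p k with rfl | hpk
  · rw [insperm_self]
    rw [Fin.succAbove_of_le_castSucc _ _ (Fin.castSucc_le_castSucc_iff.mpr (Fin.le_last _))]
    rw [Fin.succ_last]
    have : τ (Fin.castSucc p) = Fin.last (m + 1) := insperm_self ρ (Fin.castSucc p)
    rw [this]
  · obtain ⟨q, rfl⟩ := Fin.exists_succAbove_eq hpk
    rw [insperm_succAbove]
    rw [Fin.castSucc_succAbove_castSucc, fperm_spec]
    rw [← Fin.castSucc_succAbove_castSucc, hτ, insperm_succAbove]

open Polynomial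

open Classical in
noncomputable def Bmat (m : ℕ) :
    Matrix (Equiv.Perm (Fin (m + 1))) (Equiv.Perm (Fin (m + 1))) ℝ :=
  fun σ τ => if ∃ k, insperm (fperm σ) k = τ then 1 else 0

open Classical in
noncomputable def Cmat (m : ℕ) :
    Matrix (Equiv.Perm (Fin (m + 1))) (Equiv.Perm (Fin m)) ℝ :=
  fun σ ρ => if fperm σ = ρ then 1 else 0

open Classical in
noncomputable def Dmat (m : ℕ) :
    Matrix (Equiv.Perm (Fin m)) (Equiv.Perm (Fin (m + 1))) ℝ :=
  fun ρ τ => if ∃ k, insperm ρ k = τ then 1 else 0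

open Classical in
lemma sum_indicator {m : ℕ} (ρ : Equiv.Perm (Fin m)) (τ : Equiv.Perm (Fin (m + 1))) :
    ∑ k : Fin (m + 1), (if insperm ρ k = τ then (1 : ℝ) else 0)
      = if ∃ k, insperm ρ k = τ then 1 else 0 := by
  by_cases h : ∃ k, insperm ρ k = τ
  · obtain ⟨k0, hk0⟩ := h
    rw [if_pos ⟨k0, hk0⟩, Finset.sum_eq_single k0]
    · rw [if_pos hk0]
    · intro k _ hk
      rw [if_neg]
      intro hc
      exact hk (insperm_k_injective ρ ρ (hc.trans hk0.symm))
    · simp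
  · rw [if_neg h]
    exact Finset.sum_eq_zero fun k _ => if_neg fun hc => h ⟨k, hc⟩

lemma B_eq_CD (m : ℕ) : Bmat m = Cmat m * Dmat m := by
  ext σ τ
  rw [Matrix.mul_apply]
  classical
  simp only [Bmat, Cmat, Dmat, ite_mul, one_mul, zero_mul]
  rw [Finset.sum_ite_eq Finset.univ (fperm σ) (fun ρ => if ∃ k, insperm ρ k = τ then (1:ℝ) else 0)]
  simp

lemma DC_eq (m : ℕ) : Dmat (m + 1) * Cmat (m + 1) = 1 + Bmat m := by
  ext ρ ρ'
  rw [Matrix.mul_apply]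
  classical
  have h1 : ∀ τ, Dmat (m + 1) ρ τ * Cmat (m + 1) τ ρ'
      = ∑ k : Fin (m + 2), (if insperm ρ k = τ then (1 : ℝ) else 0)
          * (if fperm τ = ρ' then 1 else 0) := by
    intro τ
    rw [show Dmat (m + 1) ρ τ = ∑ k : Fin (m + 2), (if insperm ρ k = τ then (1 : ℝ) else 0) from
      (sum_indicator ρ τ).symm ▸ rfl, Finset.sum_mul]
    rfl
  rw [Finset.sum_congr rfl fun τ _ => h1 τ, Finset.sum_comm]
  have h2 : ∀ k : Fin (m + 2), ∑ τ, (if insperm ρ k = τ then (1 : ℝ) else 0)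
      * (if fperm τ = ρ' then 1 else 0) = if fperm (insperm ρ k) = ρ' then 1 else 0 := by
    intro k
    simp only [ite_mul, one_mul, zero_mul]
    rw [Finset.sum_ite_eq Finset.univ (insperm ρ k)
      (fun τ => if fperm τ = ρ' then (1 : ℝ) else 0)]
    simp
  rw [Finset.sum_congr rfl fun k _ => h2 k, Fin.sum_univ_castSucc]
  have h3 : ∀ k : Fin (m + 1),
      (if fperm (insperm ρ (Fin.castSucc k)) = ρ' then (1 : ℝ) else 0)
        = if insperm (fperm ρ) k = ρ' then 1 else 0 := by
    intro k
    rw [fperm_insperm_castSucc]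
  rw [Finset.sum_congr rfl fun k _ => h3 k, sum_indicator, fperm_insperm_last]
  rw [Matrix.add_apply, Matrix.one_apply, Bmat]
  rw [add_comm]



lemma Kstd_eq_smul_Bmat (m : ℕ) : Kstd (m + 1) = (((m : ℝ) + 1)⁻¹) • Bmat m := by
  ext σ τ
  rw [Matrix.smul_apply, Kstd]
  classical
  have hcond : ∀ k : Fin (m + 1),
      (((word (m + 1) σ).dropLast.map fun j =>
          if (word (m + 1) σ).getLastD 0 < j then j - 1 else j).insertIdx (k : ℕ) (m + 1)
        = word (m + 1) τ) ↔ insperm (fperm σ) k = τ := by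
    intro k
    rw [std_word, insert_word]
    exact ⟨fun h => word_injective h, fun h => by rw [h]⟩
  have hcard : ((Finset.univ.filter fun k : Fin (m + 1) =>
      ((word (m + 1) σ).dropLast.map fun j =>
          if (word (m + 1) σ).getLastD 0 < j then j - 1 else j).insertIdx (k : ℕ) (m + 1)
        = word (m + 1) τ).card : ℝ)
      = ∑ k : Fin (m + 1), (if insperm (fperm σ) k = τ then (1 : ℝ) else 0) := by
    rw [Finset.card_filter]
    push_cast
    refine Finset.sum_congr rfl fun k _ => ?_
    by_cases h : insperm (fperm σ) k = τ
    · rw [if_pos ((hcond k).mpr h), if_pos h]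
    · rw [if_neg (fun hc => h ((hcond k).mp hc)), if_neg h]
  rw [hcard, sum_indicator]
  rw [div_eq_inv_mul]
  push_cast
  rw [Bmat]
  rfl

section PolyFactor

variable {α β : Type*} [Fintype α] [Fintype β] [DecidableEq α] [DecidableEq β]

lemma pow_factor (Cm : Matrix α β ℝ) (Dm : Matrix β α ℝ) (n : ℕ) :
    (Cm * Dm) ^ (n + 1) = Cm * (Dm * Cm) ^ n * Dm := by
  induction n with
  | zero => simp [pow_succ]
  | succ n ih =>
    rw [pow_succ, ih, pow_succ]
    simp only [Matrix.mul_assoc]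

lemma aeval_factor (Cm : Matrix α β ℝ) (Dm : Matrix β α ℝ) (q : ℝ[X]) :
    (Cm * Dm) * (Polynomial.aeval (Cm * Dm) q) = Cm * (Polynomial.aeval (Dm * Cm) q) * Dm := by
  induction q using Polynomial.induction_on' with
  | add p r hp hr => rw [map_add, map_add, mul_add, Matrix.mul_add, Matrix.add_mul, hp, hr]
  | monomial n a =>
    simp only [Polynomial.aeval_monomial, ← Algebra.smul_def, mul_smul_comm, smul_mul_assoc,
      Matrix.mul_smul, Matrix.smul_mul]
    rw [← pow_succ', pow_factor]

end PolyFactor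

section Shift

variable {α : Type*} [Fintype α] [DecidableEq α]

lemma aeval_one_add (M : Matrix α α ℝ) (s : Finset ℝ) :
    Polynomial.aeval (1 + M) (∏ x ∈ s, (X - Polynomial.C (x + 1)))
      = Polynomial.aeval M (∏ x ∈ s, (X - Polynomial.C x)) := by
  induction s using Finset.induction with
  | empty => simp
  | @insert a s ha ih =>
    rw [Finset.prod_insert ha, Finset.prod_insert ha, map_mul, map_mul, ih]
    congr 1
    rw [map_sub, map_sub, aeval_X, aeval_X, aeval_C, aeval_C, map_add, map_one]
    abel

lemma aeval_smul (c : ℝ) (M : Matrix α α ℝ) (s : Finset ℝ) :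
    Polynomial.aeval (c • M) (∏ x ∈ s, (X - Polynomial.C (c * x)))
      = c ^ s.card • Polynomial.aeval M (∏ x ∈ s, (X - Polynomial.C x)) := by
  induction s using Finset.induction with
  | empty => simp
  | @insert a s ha ih =>
    have h1 : c • M - algebraMap ℝ (Matrix α α ℝ) (c * a) = c • (M - algebraMap ℝ _ a) := by
      simp [Algebra.algebraMap_eq_smul_one, smul_smul, smul_sub]
    rw [Finset.prod_insert ha, Finset.prod_insert ha,
      map_mul (Polynomial.aeval (c • M)) (X - Polynomial.C (c * a)) _,
      map_mul (Polynomial.aeval M) (X - Polynomial.C a) _, ih,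
      Finset.card_insert_of_notMem ha,
      map_sub, map_sub, aeval_X, aeval_X, aeval_C, aeval_C, h1, smul_mul_smul_comm,
      ← pow_succ']

end Shift

lemma bmat_annihilated : ∀ m : ℕ, ∃ s : Finset ℝ, (∀ x ∈ s, 0 ≤ x) ∧
    Polynomial.aeval (Bmat m) (∏ x ∈ s, (X - Polynomial.C x)) = 0 := by
  intro m
  induction m with
  | zero =>
    refine ⟨{1}, by norm_num, ?_⟩
    have hsub : ∀ σ τ : Equiv.Perm (Fin (0 + 1)), σ = τ := fun σ τ =>
      Equiv.ext fun x => Fin.eq_of_val_eq (by omega)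
    have hB : Bmat 0 = 1 := by
      ext σ τ
      have hστ : σ = τ := hsub σ τ
      subst hστ
      rw [Matrix.one_apply_eq, Bmat]
      rw [if_pos ⟨0, hsub _ _⟩]
    rw [hB, Finset.prod_singleton, map_sub, aeval_X, aeval_C, map_one, sub_self]
  | succ m ih =>
    obtain ⟨s, hs0, hs⟩ := ih
    refine ⟨insert 0 (s.image (fun x => x + 1)), ?_, ?_⟩
    · intro x hx
      rcases Finset.mem_insert.mp hx with rfl | hx
      · exact le_refl 0
      · obtain ⟨y, hy, rfl⟩ := Finset.mem_image.mp hx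
        have := hs0 y hy; linarith
    · have h0 : (0 : ℝ) ∉ s.image (fun x => x + 1) := by
        simp only [Finset.mem_image, not_exists]
        intro y hy
        have := hs0 y hy.1
        have := hy.2
        linarith
      rw [Finset.prod_insert h0, Polynomial.C_0, sub_zero]
      rw [Finset.prod_image (fun x _ y _ h => by linarith : ∀ x ∈ s, ∀ y ∈ s, x + 1 = y + 1 → x = y)]
      rw [map_mul, aeval_X]
      rw [B_eq_CD (m + 1)]
      rw [aeval_factor]
      rw [DC_eq m, aeval_one_add, hs]
      rw [Matrix.mul_zero, Matrix.zero_mul]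

open Polynomial Module.End

variable {V : Type*} [AddCommGroup V] [Module ℝ V]

lemma ker_aeval_X_sub_C (f : Module.End ℝ V) (μ : ℝ) :
    LinearMap.ker (Polynomial.aeval f (X - C μ)) = f.eigenspace μ := by
  ext x
  simp [mem_eigenspace_iff, sub_eq_zero, Module.algebraMap_end_apply, LinearMap.sub_apply]

lemma ker_aeval_prod (f : Module.End ℝ V) (s : Finset ℝ) :
    LinearMap.ker (Polynomial.aeval f (∏ x ∈ s, (X - C x))) = ⨆ μ ∈ s, f.eigenspace μ := by
  induction s using Finset.induction with
  | empty => simp [Polynomial.aeval_one, LinearMap.ker_eq_bot', Module.End.one_apply]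
  | @insert a s ha ih =>
    have hcop : IsCoprime (X - C a) (∏ x ∈ s, (X - C x)) := by
      refine IsCoprime.prod_right fun b hb => ?_
      exact Polynomial.isCoprime_X_sub_C_of_isUnit_sub
        (sub_ne_zero_of_ne (by rintro rfl; exact ha hb)).isUnit
    rw [Finset.prod_insert ha, ← Polynomial.sup_ker_aeval_eq_ker_aeval_mul_of_coprime f hcop,
      ih, ker_aeval_X_sub_C]
    rw [Finset.iSup_insert]

set_option maxHeartbeats 1600000 in
lemma diag_core {ι : Type*} [Fintype ι] [DecidableEq ι] (A : Matrix ι ι ℝ) (s : Finset ℝ)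
    (h : Polynomial.aeval A (∏ x ∈ s, (X - C x)) = 0) :
    ∃ (P : Matrix ι ι ℝ) (d : ι → ℝ), IsUnit P.det ∧ A = P * Matrix.diagonal d * P⁻¹ := by
  classical
  set φ : Matrix ι ι ℝ →ₐ[ℝ] Module.End ℝ (ι → ℝ) :=
    (Matrix.toLinAlgEquiv' : Matrix ι ι ℝ ≃ₐ[ℝ] _).toAlgHom with hφ
  set f : Module.End ℝ (ι → ℝ) := φ A with hf
  have haf : ∀ p : ℝ[X], Polynomial.aeval f p = φ (Polynomial.aeval A p) := by
    intro p
    rw [hf]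
    exact Polynomial.aeval_algHom_apply φ A p
  have hker : LinearMap.ker (Polynomial.aeval f (∏ x ∈ s, (X - C x))) = ⊤ := by
    rw [haf, h]
    simp
  have hsup : ⨆ μ : s, f.eigenspace (μ : ℝ) = ⊤ := by
    rw [iSup_subtype]
    rw [ker_aeval_prod] at hker
    exact hker
  have hind : iSupIndep (fun μ : s => f.eigenspace (μ : ℝ)) :=
    f.eigenspaces_iSupIndep.comp Subtype.val_injective
  have hInt : DirectSum.IsInternal (fun μ : s => f.eigenspace (μ : ℝ)) :=
    (DirectSum.isInternal_submodule_iff_iSupIndep_and_iSup_eq_top _).2 ⟨hind, hsup⟩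
  let bases := fun μ : s => Module.Free.chooseBasis ℝ (f.eigenspace (μ : ℝ))
  let cb := hInt.collectedBasis bases
  let e := cb.indexEquiv (Pi.basisFun ℝ ι)
  let B := cb.reindex e
  let d : ι → ℝ := fun i => ((e.symm i).1 : ℝ)
  have hBmem : ∀ i, B i ∈ f.eigenspace (d i) := by
    intro i
    rw [show B i = cb (e.symm i) from cb.reindex_apply e i]
    exact hInt.collectedBasis_mem bases (e.symm i)
  have hBd : ∀ i, f (B i) = d i • B i := fun i => mem_eigenspace_iff.1 (hBmem i)
  have hdiag : LinearMap.toMatrix B B f = Matrix.diagonal d := by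
    ext i j
    rw [LinearMap.toMatrix_apply, hBd j, map_smul, B.repr_self]
    simp [Matrix.diagonal_apply, Finsupp.single_apply]
    split_ifs with h1 h2 h3 <;> simp_all
  let c := Pi.basisFun ℝ ι
  let P := c.toMatrix B
  have : Invertible P := c.invertibleToMatrix B
  have hPdet : IsUnit P.det := Matrix.isUnit_det_of_invertible P
  have hPinv : P⁻¹ = B.toMatrix c := by
    apply Matrix.inv_eq_right_inv
    exact Module.Basis.toMatrix_mul_toMatrix_flip _ _
  refine ⟨P, d, hPdet, ?_⟩
  have key : P * LinearMap.toMatrix B B f * B.toMatrix c = LinearMap.toMatrix c c f :=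
    basis_toMatrix_mul_linearMap_toMatrix_mul_basis_toMatrix (b := c) (b' := B) (c' := B)
      (c := c) (f := f)
  have hA : LinearMap.toMatrix c c f = A := by
    rw [LinearMap.toMatrix_eq_toMatrix']
    exact LinearMap.toMatrix'_toLin' A
  rw [hPinv, ← hdiag, key, hA]

/-- **Diagonalisability of the bottom-to-random-with-standardisation chain.** For every
`n ≥ 1`, the transition matrix `K_std` on `S_n` is diagonalisable over `ℝ`: it is
conjugate to a diagonal matrix. -/
theorem bottom_to_random_with_std_diagonalisable (n : ℕ) (hn : 1 ≤ n) :
    ∃ (P : Matrix (Equiv.Perm (Fin n)) (Equiv.Perm (Fin n)) ℝ)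
      (d : Equiv.Perm (Fin n) → ℝ),
      IsUnit P.det ∧ Kstd n = P * Matrix.diagonal d * P⁻¹ := by
  obtain ⟨m, rfl⟩ : ∃ m, n = m + 1 := ⟨n - 1, by omega⟩
  obtain ⟨s, hs0, hs⟩ := bmat_annihilated m
  set c : ℝ := ((m : ℝ) + 1)⁻¹ with hcdef
  have hc : c ≠ 0 := by
    rw [hcdef]
    positivity
  have hinj : ∀ x ∈ s, ∀ y ∈ s, c * x = c * y → x = y := fun x _ y _ h =>
    mul_left_cancel₀ hc h
  apply diag_core (Kstd (m + 1)) (s.image (fun x => c * x))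
  rw [Finset.prod_image hinj, Kstd_eq_smul_Bmat, _root_.aeval_smul, hs, smul_zero]
end
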